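/- arXiv:0811.4714 — 4 statements merged into one kernel-verified Lean document; each statement's English description precedes it below -/
import Mathlib

section
/- The characteristic polynomial of the 4×4 matrix F = σQ, where σ is the standard symplectic matrix and Q is the symmetric matrix of the quadratic form q(x₁,x₂,ξ₁,ξ₂) = ξ₁² + ξ₂² + (1−ν²)x₁² + (1+ν²)x₂² − 2ω(x₁ξ₂ − x₂ξ₁), equals λ⁴ + 2(1+ω²)λ² + (1−ω²)² − ν⁴ = (λ² + 1 + ω²)² − (ν⁴ + 4ω²). -/
/-!
Split `ℝ⁴ = ℝ²ₓ ⊕ ℝ²_ξ`. In this splitting `F = σ Q` has the block form `[[ωJ, 1], [-Qₓₓ, ωJ]]`,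
with `J` the quarter-turn rotation and `Qₓₓ = diag(1 - ν², 1 + ν²)`, so `F - λ = [[A, 1], [C, A]]`
with `A = ωJ - λ`. Swapping the two block columns (an even permutation for `2 × 2` blocks) and
taking the Schur complement of the identity block gives `det (F - λ) = det (C - A²)`, and since
`J² = -1` this `2 × 2` determinant is `(λ² - ω² + 1)² + 4λ²ω² - ν⁴`.
-/

open Matrix

theorem det_fromBlocks_one₁₂_of_fin_two {R : Type*} [CommRing R]
    (A C D : Matrix (Fin 2) (Fin 2) R) :
    (fromBlocks A 1 C D).det = (C - D * A).det := by
  have hswap : fromBlocks A 1 C D = (fromBlocks 1 A D C).submatrix id (Equiv.sumComm _ _) := by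
    ext (i | i) (j | j) <;> rfl
  have hsign : Equiv.Perm.sign (Equiv.sumComm (Fin 2) (Fin 2)) = 1 := by decide
  rw [hswap, det_permute', hsign, det_fromBlocks_one₁₁, Units.val_one, Int.cast_one, one_mul]

theorem det_sub_smul_one_of_submatrix_eq_fromBlocks {R : Type*} [CommRing R]
    {M : Matrix (Fin 4) (Fin 4) R} {K C : Matrix (Fin 2) (Fin 2) R}
    (hM : M.submatrix finSumFinEquiv finSumFinEquiv = fromBlocks K 1 C K) (lam : R) :
    (M - lam • 1).det = (C - (K - lam • 1) * (K - lam • 1)).det := by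
  have hblocks : (M - lam • 1).submatrix (finSumFinEquiv : Fin 2 ⊕ Fin 2 ≃ Fin 4) finSumFinEquiv
      = fromBlocks (K - lam • 1) 1 C (K - lam • 1) := by
    have hentry (i j) : M (finSumFinEquiv i) (finSumFinEquiv j) = fromBlocks K 1 C K i j := by
      rw [← hM, submatrix_apply]
    ext (i | i) (j | j) <;> simp [hentry, one_apply]
  rw [← det_submatrix_equiv_self (finSumFinEquiv : Fin 2 ⊕ Fin 2 ≃ Fin 4), hblocks,
    det_fromBlocks_one₁₂_of_fin_two]

/-- The characteristic polynomial of `F = σ Q` where `Q` is the matrix of the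
quadratic form `q` and `σ` the standard symplectic matrix. -/
theorem charpoly_of_fundamental_matrix (ω ν : ℝ)
    (Q : Matrix (Fin 4) (Fin 4) ℝ)
    (hQ : Q = !![1 - ν^2, 0, 0, -ω;
                 0, 1 + ν^2, ω, 0;
                 0, ω, 1, 0;
                 -ω, 0, 0, 1])
    (σ : Matrix (Fin 4) (Fin 4) ℝ)
    (hσ : σ = !![0, 0, 1, 0;
                 0, 0, 0, 1;
                 -1, 0, 0, 0;
                 0, -1, 0, 0]) :
    ∀ lam : ℝ,
      (σ * Q - lam • (1 : Matrix (Fin 4) (Fin 4) ℝ)).det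
        = lam^4 + 2*(1+ω^2)*lam^2 + (1-ω^2)^2 - ν^4
      ∧ lam^4 + 2*(1+ω^2)*lam^2 + (1-ω^2)^2 - ν^4
        = (lam^2 + 1 + ω^2)^2 - (ν^4 + 4*ω^2) := by
  intro lam
  refine ⟨?_, by ring⟩
  have hF : σ * Q =
      !![0, ω, 1, 0; -ω, 0, 0, 1; -(1 - ν^2), 0, 0, ω; 0, -(1 + ν^2), -ω, 0] := by
    subst hQ hσ
    ext i j
    fin_cases i <;> fin_cases j <;> simp
  have hblocks : (σ * Q).submatrix finSumFinEquiv finSumFinEquiv =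
      fromBlocks !![0, ω; -ω, 0] 1 !![-(1 - ν^2), 0; 0, -(1 + ν^2)] !![0, ω; -ω, 0] := by
    rw [hF]
    ext (i | i) (j | j) <;> fin_cases i <;> fin_cases j <;> rfl
  have hshift : !![0, ω; -ω, 0] - lam • (1 : Matrix (Fin 2) (Fin 2) ℝ) = !![-lam, ω; -ω, -lam] := by
    ext i j
    fin_cases i <;> fin_cases j <;> simp
  rw [det_sub_smul_one_of_submatrix_eq_fromBlocks hblocks, hshift, mul_fin_two, det_fin_two]
  simp only [Matrix.sub_apply, of_apply, cons_val_zero, cons_val_one, cons_val_fin_one]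
  ring
end

section
/- Let ω, ν > 0 with ω² + ν² < 1, α = √(ν⁴+4ω²), μ₁² = 1+ω²−α, μ₂² = 1+ω²+α. The quadratic form q = ξ₁² + ξ₂² + (1−ν²)x₁² + (1+ν²)x₂² − 2ω(x₁ξ₂−x₂ξ₁) satisfies the identity q = ((α−2ω²+ν²)/(2α))·[ξ₁ − ((α−ν²)/(2ω))x₂]² + ((α+2ω²−ν²)/(2αμ₂²))·ε²·[ξ₂ + ((α+ν²)/(2ω))x₁]² + 2ω²·((1+ω²+α)/(α(α+2ω²+ν²)))·[ξ₁ + ((α+ν²)/(2ω))x₂]² + ((α+2ω²+ν²)/(2α))·[ξ₂ − ((α−ν²)/(2ω))x₁]², where ε² = 1 − ω² − ν². -/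
/-!
Both sides are quadratic forms in `(x₁, x₂, ξ₁, ξ₂)`, so it suffices to match the coefficients
of the six monomials that occur. Each of these six scalar identities is a rational identity in
`ω, ν, α` which holds modulo `α² = ν⁴ + 4ω²`, i.e. `(α - ν²)(α + ν²) = 4ω²`: the two slopes
`(α - ν²)/(2ω)` and `(α + ν²)/(2ω)` are reciprocal.
-/

theorem quadForm_eq_weighted_squares {ω ν A B C D c d : ℝ} (hξ₁ : A + C = 1) (hξ₂ : B + D = 1)
    (hx₁ : B * d^2 + D * c^2 = 1 - ν^2) (hx₂ : A * c^2 + C * d^2 = 1 + ν^2)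
    (hx₁ξ₂ : D * c - B * d = ω) (hx₂ξ₁ : C * d - A * c = ω) (x₁ x₂ ξ₁ ξ₂ : ℝ) :
    ξ₁^2 + ξ₂^2 + (1 - ν^2)*x₁^2 + (1 + ν^2)*x₂^2 - 2*ω*(x₁*ξ₂ - x₂*ξ₁)
      = A * (ξ₁ - c*x₂)^2 + B * (ξ₂ + d*x₁)^2 + C * (ξ₁ + d*x₂)^2 + D * (ξ₂ - c*x₁)^2 := by
  linear_combination (-ξ₁^2) * hξ₁ - ξ₂^2 * hξ₂ - x₁^2 * hx₁ - x₂^2 * hx₂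
    + 2 * x₁ * ξ₂ * hx₁ξ₂ - 2 * x₂ * ξ₁ * hx₂ξ₁

section

variable {ω ν α : ℝ}

theorem coeff_ξ₁_sq (hα₀ : 0 < α) (hα : α^2 = ν^4 + 4*ω^2) :
    (α - 2*ω^2 + ν^2)/(2*α) + 2*ω^2 * ((1 + ω^2 + α)/(α*(α + 2*ω^2 + ν^2))) = 1 := by
  have : α + 2*ω^2 + ν^2 ≠ 0 := by positivity
  field_simp
  linear_combination -hα

theorem coeff_ξ₂_sq (hα₀ : 0 < α) (hα : α^2 = ν^4 + 4*ω^2) :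
    (α + 2*ω^2 - ν^2)/(2*α*(1 + ω^2 + α)) * (1 - ω^2 - ν^2) + (α + 2*ω^2 + ν^2)/(2*α) = 1 := by
  have : 1 + ω^2 + α ≠ 0 := by positivity
  field_simp
  linear_combination -hα

theorem coeff_x₁_sq (hω : ω ≠ 0) (hα₀ : 0 < α) (hα : α^2 = ν^4 + 4*ω^2) :
    (α + 2*ω^2 - ν^2)/(2*α*(1 + ω^2 + α)) * (1 - ω^2 - ν^2) * ((α + ν^2)/(2*ω))^2
      + (α + 2*ω^2 + ν^2)/(2*α) * ((α - ν^2)/(2*ω))^2 = 1 - ν^2 := by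
  have : 1 + ω^2 + α ≠ 0 := by positivity
  field_simp
  linear_combination (α^2 + 2*(1 + ω^2 - ν^2)*α - ν^4) * hα

theorem coeff_x₂_sq (hω : ω ≠ 0) (hα₀ : 0 < α) (hα : α^2 = ν^4 + 4*ω^2) :
    (α - 2*ω^2 + ν^2)/(2*α) * ((α - ν^2)/(2*ω))^2
      + 2*ω^2 * ((1 + ω^2 + α)/(α*(α + 2*ω^2 + ν^2))) * ((α + ν^2)/(2*ω))^2 = 1 + ν^2 := by
  have : α + 2*ω^2 + ν^2 ≠ 0 := by positivity
  field_simp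
  linear_combination (α^2 + 4*ω^2*α - ν^4) * hα

theorem coeff_x₁_ξ₂ (hω : ω ≠ 0) (hα₀ : 0 < α) (hα : α^2 = ν^4 + 4*ω^2) :
    (α + 2*ω^2 + ν^2)/(2*α) * ((α - ν^2)/(2*ω))
      - (α + 2*ω^2 - ν^2)/(2*α*(1 + ω^2 + α)) * (1 - ω^2 - ν^2) * ((α + ν^2)/(2*ω)) = ω := by
  have : 1 + ω^2 + α ≠ 0 := by positivity
  field_simp
  linear_combination (α + ν^2) * hα

theorem coeff_x₂_ξ₁ (hω : ω ≠ 0) (hα₀ : 0 < α) (hα : α^2 = ν^4 + 4*ω^2) :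
    2*ω^2 * ((1 + ω^2 + α)/(α*(α + 2*ω^2 + ν^2))) * ((α + ν^2)/(2*ω))
      - (α - 2*ω^2 + ν^2)/(2*α) * ((α - ν^2)/(2*ω)) = ω := by
  have : α + 2*ω^2 + ν^2 ≠ 0 := by positivity
  field_simp
  linear_combination -(α + ν^2) * hα

end

theorem master_decomposition_general (ω ν : ℝ) (hω : 0 < ω) :
    let α := Real.sqrt (ν^4 + 4*ω^2)
    let ε2 := 1 - ω^2 - ν^2
    let μ₂sq := 1 + ω^2 + α
    ∀ x₁ x₂ ξ₁ ξ₂ : ℝ,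
      ξ₁^2 + ξ₂^2 + (1 - ν^2)*x₁^2 + (1 + ν^2)*x₂^2 - 2*ω*(x₁*ξ₂ - x₂*ξ₁)
        = ((α - 2*ω^2 + ν^2)/(2*α)) * (ξ₁ - ((α - ν^2)/(2*ω))*x₂)^2
          + ((α + 2*ω^2 - ν^2)/(2*α*μ₂sq)) * ε2
              * (ξ₂ + ((α + ν^2)/(2*ω))*x₁)^2
          + 2*ω^2 * ((1 + ω^2 + α)/(α*(α + 2*ω^2 + ν^2)))
              * (ξ₁ + ((α + ν^2)/(2*ω))*x₂)^2
          + ((α + 2*ω^2 + ν^2)/(2*α)) * (ξ₂ - ((α - ν^2)/(2*ω))*x₁)^2 := by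
  intro α ε2 μ₂sq
  have hα₀ : 0 < α := Real.sqrt_pos.mpr (by positivity)
  have hα : α^2 = ν^4 + 4*ω^2 := Real.sq_sqrt (by positivity)
  exact quadForm_eq_weighted_squares (coeff_ξ₁_sq hα₀ hα) (coeff_ξ₂_sq hα₀ hα)
    (coeff_x₁_sq hω.ne' hα₀ hα) (coeff_x₂_sq hω.ne' hα₀ hα)
    (coeff_x₁_ξ₂ hω.ne' hα₀ hα) (coeff_x₂_ξ₁ hω.ne' hα₀ hα)

/-- Master symplectic decomposition of the anisotropic quadratic form. -/
theorem master_decomposition (ω ν : ℝ) (hω : 0 < ω) (hν : 0 < ν)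
    (h : ω^2 + ν^2 < 1) :
    let α := Real.sqrt (ν^4 + 4*ω^2)
    let ε2 := 1 - ω^2 - ν^2
    let μ₂sq := 1 + ω^2 + α
    ∀ x₁ x₂ ξ₁ ξ₂ : ℝ,
      ξ₁^2 + ξ₂^2 + (1 - ν^2)*x₁^2 + (1 + ν^2)*x₂^2 - 2*ω*(x₁*ξ₂ - x₂*ξ₁)
        = ((α - 2*ω^2 + ν^2)/(2*α)) * (ξ₁ - ((α - ν^2)/(2*ω))*x₂)^2
          + ((α + 2*ω^2 - ν^2)/(2*α*μ₂sq)) * ε2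
              * (ξ₂ + ((α + ν^2)/(2*ω))*x₁)^2
          + 2*ω^2 * ((1 + ω^2 + α)/(α*(α + 2*ω^2 + ν^2)))
              * (ξ₁ + ((α + ν^2)/(2*ω))*x₂)^2
          + ((α + 2*ω^2 + ν^2)/(2*α)) * (ξ₂ - ((α - ν^2)/(2*ω))*x₁)^2 :=
  master_decomposition_general ω ν hω
end

section
/- The minimizer of J = inf{ ½∫t²p(t)²dt + (g₀/2)∫p(t)⁴dt : p real-valued, p ∈ L²(ℝ)∩L⁴(ℝ), ‖p‖_{L²(ℝ)} = 1 } is unique among nonnegative functions and is given by p(t)² = (3/(4R))(1 − t²/R²)₊ with R = (3g₀/2)^{1/3}; in particular this p satisfies the constraint ∫p² = 1. -/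
/-!
Write `u = p²`, so that the functional becomes `E(u) = ∫ V u + (g/2) ∫ u²` with `V t = t²/2`,
strictly convex in `u`, and the constraint becomes `∫ u = 1`. With the Lagrange multiplier
`μ = R²/2` and `u₀ = (μ - V)₊ / g`, completing the square gives the pointwise inequality
`V u₀ + (g/2) u₀² - μ u₀ + (g/2) (u - u₀)² ≤ V u + (g/2) u² - μ u` for every `u ≥ 0`.
Integrating it, the `μ`-terms cancel by the mass constraint, so `E(u₀) + (g/2) ‖u - u₀‖₂² ≤ E(u)`:
`u₀` is the minimizer, and equality forces `u = u₀` a.e., hence `p = √u₀` when `p ≥ 0`.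
The value `R³ = 3g/2` is the one for which `∫ u₀ = 1`.
-/

open MeasureTheory Real

theorem add_sq_sub_le_of_eq_max_div {v μ g u w : ℝ} (hg : 0 < g) (hu : 0 ≤ u)
    (hw : w = max (μ - v) 0 / g) :
    v * w + g / 2 * w ^ 2 + g / 2 * (u - w) ^ 2 + μ * u ≤ v * u + g / 2 * u ^ 2 + μ * w := by
  -- the gap is `(u - w) (g w - (μ - v))`: zero where `v ≤ μ`, and `u (v - μ) ≥ 0` elsewhere
  rcases le_total (μ - v) 0 with h | h
  · rw [max_eq_right h, zero_div] at hw
    subst hw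
    nlinarith [mul_nonneg hu (neg_nonneg.2 h)]
  · rw [max_eq_left h, eq_div_iff hg.ne'] at hw
    exact le_of_eq (by linear_combination (w - u) * hw)

section ThomasFermi

variable {α : Type*} {V : α → ℝ} {μ g : ℝ}

noncomputable def thomasFermiProfile (V : α → ℝ) (μ g : ℝ) (x : α) : ℝ :=
  max (μ - V x) 0 / g

theorem thomasFermiProfile_nonneg (hg : 0 < g) (x : α) : 0 ≤ thomasFermiProfile V μ g x :=
  div_nonneg (le_max_right _ _) hg.le

theorem continuous_thomasFermiProfile [TopologicalSpace α] (hV : Continuous V) :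
    Continuous (thomasFermiProfile V μ g) :=
  ((continuous_const.sub hV).max continuous_const).div_const g

variable [MeasurableSpace α] {ν : Measure α}

theorem measurable_thomasFermiProfile (hV : Measurable V) :
    Measurable (thomasFermiProfile V μ g) :=
  ((measurable_const.sub hV).max measurable_const).div_const g

noncomputable def thomasFermiEnergy (ν : Measure α) (V : α → ℝ) (g : ℝ) (u : α → ℝ) :
    ENNReal :=
  (∫⁻ x, ENNReal.ofReal (V x * u x) ∂ν) + ∫⁻ x, ENNReal.ofReal (g / 2 * u x ^ 2) ∂ν

theorem lintegral_ofReal_const_mul {f : α → ℝ} {c : ℝ} (hc : 0 ≤ c) :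
    ∫⁻ x, ENNReal.ofReal (c * f x) ∂ν = ENNReal.ofReal c * ∫⁻ x, ENNReal.ofReal (f x) ∂ν := by
  simp_rw [ENNReal.ofReal_mul hc]
  exact lintegral_const_mul' _ _ ENNReal.ofReal_ne_top

section Minimizer

variable (hV : Measurable V) (hV₀ : ∀ x, 0 ≤ V x) (hμ : 0 ≤ μ) (hg : 0 < g)
  (hmass₀ : ∫⁻ x, ENNReal.ofReal (thomasFermiProfile V μ g x) ∂ν = 1)
  {u : α → ℝ} (hu : AEMeasurable u ν) (hu₀ : ∀ x, 0 ≤ u x)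
  (hmass : ∫⁻ x, ENNReal.ofReal (u x) ∂ν = 1)
include hV hV₀ hμ hg hmass₀ hu hu₀ hmass

theorem thomasFermiEnergy_profile_add_le :
    thomasFermiEnergy ν V g (thomasFermiProfile V μ g)
        + ∫⁻ x, ENNReal.ofReal (g / 2 * (u x - thomasFermiProfile V μ g x) ^ 2) ∂ν
      ≤ thomasFermiEnergy ν V g u := by
  set w := thomasFermiProfile V μ g
  have hw : Measurable w := measurable_thomasFermiProfile hV
  have hpointwise : ∀ x,
      ENNReal.ofReal (V x * w x) + ENNReal.ofReal (g / 2 * w x ^ 2)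
          + ENNReal.ofReal (g / 2 * (u x - w x) ^ 2) + ENNReal.ofReal (μ * u x)
        ≤ ENNReal.ofReal (V x * u x) + ENNReal.ofReal (g / 2 * u x ^ 2)
          + ENNReal.ofReal (μ * w x) := fun x => by
    have := hV₀ x; have := hu₀ x; have := thomasFermiProfile_nonneg (V := V) (μ := μ) hg x
    rw [← ENNReal.ofReal_add (by positivity) (by positivity),
      ← ENNReal.ofReal_add (by positivity) (by positivity),
      ← ENNReal.ofReal_add (by positivity) (by positivity),
      ← ENNReal.ofReal_add (by positivity) (by positivity),
      ← ENNReal.ofReal_add (by positivity) (by positivity)]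
    exact ENNReal.ofReal_le_ofReal (add_sq_sub_le_of_eq_max_div hg (hu₀ x) rfl)
  refine (ENNReal.add_le_add_iff_right (ENNReal.ofReal_ne_top (r := μ))).1 ?_
  calc thomasFermiEnergy ν V g w + ∫⁻ x, ENNReal.ofReal (g / 2 * (u x - w x) ^ 2) ∂ν
        + ENNReal.ofReal μ
      = (∫⁻ x, ENNReal.ofReal (V x * w x) ∂ν) + (∫⁻ x, ENNReal.ofReal (g / 2 * w x ^ 2) ∂ν)
        + (∫⁻ x, ENNReal.ofReal (g / 2 * (u x - w x) ^ 2) ∂ν)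
        + ∫⁻ x, ENNReal.ofReal (μ * u x) ∂ν := by
        rw [lintegral_ofReal_const_mul hμ, hmass, mul_one]; rfl
    _ ≤ ∫⁻ x, ENNReal.ofReal (V x * w x) + ENNReal.ofReal (g / 2 * w x ^ 2)
          + ENNReal.ofReal (g / 2 * (u x - w x) ^ 2) + ENNReal.ofReal (μ * u x) ∂ν := by
        grw [le_lintegral_add, le_lintegral_add, le_lintegral_add]
    _ ≤ ∫⁻ x, ENNReal.ofReal (V x * u x) + ENNReal.ofReal (g / 2 * u x ^ 2)
          + ENNReal.ofReal (μ * w x) ∂ν := lintegral_mono hpointwise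
    _ = thomasFermiEnergy ν V g u + ENNReal.ofReal μ := by
        rw [lintegral_add_right' _ (hw.const_mul μ).ennreal_ofReal.aemeasurable,
          lintegral_add_right' _ ((hu.pow_const 2).const_mul _).ennreal_ofReal,
          lintegral_ofReal_const_mul hμ, hmass₀, mul_one]
        rfl

theorem thomasFermiEnergy_profile_le :
    thomasFermiEnergy ν V g (thomasFermiProfile V μ g) ≤ thomasFermiEnergy ν V g u :=
  le_self_add.trans (thomasFermiEnergy_profile_add_le hV hV₀ hμ hg hmass₀ hu hu₀ hmass)

theorem ae_eq_thomasFermiProfile_of_energy_eq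
    (hfin : thomasFermiEnergy ν V g (thomasFermiProfile V μ g) ≠ ⊤)
    (heq : thomasFermiEnergy ν V g u = thomasFermiEnergy ν V g (thomasFermiProfile V μ g)) :
    u =ᵐ[ν] thomasFermiProfile V μ g := by
  have hle := thomasFermiEnergy_profile_add_le hV hV₀ hμ hg hmass₀ hu hu₀ hmass
  rw [heq] at hle
  have hdist : ∫⁻ x, ENNReal.ofReal (g / 2 * (u x - thomasFermiProfile V μ g x) ^ 2) ∂ν = 0 :=
    nonpos_iff_eq_zero.1 ((ENNReal.add_le_add_iff_left hfin).1 (by simpa using hle))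
  have hw : Measurable (thomasFermiProfile V μ g) := measurable_thomasFermiProfile hV
  filter_upwards [(lintegral_eq_zero_iff'
    (((hu.sub hw.aemeasurable).pow_const 2).const_mul _).ennreal_ofReal).1 hdist] with x hx
  rw [Pi.zero_apply, ENNReal.ofReal_eq_zero] at hx
  exact sub_eq_zero.1 <| pow_eq_zero_iff two_ne_zero |>.1 <|
    le_antisymm (nonpos_of_mul_nonpos_right hx (by positivity)) (sq_nonneg _)

end Minimizer

theorem thomasFermiEnergy_ne_top [TopologicalSpace α] [OpensMeasurableSpace α]
    [IsFiniteMeasureOnCompacts ν] (hV : Continuous V) {u : α → ℝ} (hu : Continuous u)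
    (hc : HasCompactSupport u) : thomasFermiEnergy ν V g u ≠ ⊤ := by
  have hpot := (hV.mul hu).integrable_of_hasCompactSupport (μ := ν) hc.mul_left
  have hc' : HasCompactSupport fun x => g / 2 * u x ^ 2 :=
    hc.comp_left (g := fun y : ℝ => g / 2 * y ^ 2) (by simp)
  have hint : Integrable (fun x => g / 2 * u x ^ 2) ν :=
    (continuous_const.mul (hu.pow 2)).integrable_of_hasCompactSupport hc'
  exact ENNReal.add_ne_top.2 ⟨hpot.lintegral_lt_top.ne, hint.lintegral_lt_top.ne⟩

end ThomasFermi

section Harmonic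

variable {R g : ℝ}

theorem thomasFermiProfile_harmonic_eq_indicator (hR : 0 ≤ R) :
    thomasFermiProfile (fun t : ℝ => 1 / 2 * t ^ 2) (R ^ 2 / 2) g
      = (Set.Icc (-R) R).indicator fun t => (R ^ 2 / 2 - 1 / 2 * t ^ 2) / g := by
  ext t
  by_cases ht : t ∈ Set.Icc (-R) R
  · have := sq_le_sq' ht.1 ht.2
    rw [Set.indicator_of_mem ht, thomasFermiProfile, max_eq_left (by linarith)]
  · have : R ^ 2 < t ^ 2 := by
      simp only [Set.mem_Icc, not_and_or, not_le] at ht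
      rcases ht with ht | ht <;> nlinarith
    rw [Set.indicator_of_notMem ht, thomasFermiProfile, max_eq_right (by linarith), zero_div]

theorem integral_thomasFermiProfile_harmonic (hR : 0 ≤ R) :
    ∫ t, thomasFermiProfile (fun t : ℝ => 1 / 2 * t ^ 2) (R ^ 2 / 2) g t = 2 * R ^ 3 / (3 * g) := by
  rw [thomasFermiProfile_harmonic_eq_indicator hR, integral_indicator measurableSet_Icc,
    integral_Icc_eq_integral_Ioc, ← intervalIntegral.integral_of_le (by linarith)]
  simp only [one_div, intervalIntegral.integral_div, intervalIntegrable_const,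
    intervalIntegral.intervalIntegrable_pow, IntervalIntegrable.const_mul,
    intervalIntegral.integral_sub, intervalIntegral.integral_const, sub_neg_eq_add, smul_eq_mul,
    intervalIntegral.integral_const_mul, integral_pow, Nat.reduceAdd, Nat.cast_ofNat]
  ring

theorem hasCompactSupport_thomasFermiProfile_harmonic (hR : 0 ≤ R) :
    HasCompactSupport (thomasFermiProfile (fun t : ℝ => 1 / 2 * t ^ 2) (R ^ 2 / 2) g) := by
  rw [thomasFermiProfile_harmonic_eq_indicator hR]
  exact HasCompactSupport.intro isCompact_Icc fun _ ht => Set.indicator_of_notMem ht _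

theorem lintegral_thomasFermiProfile_harmonic (hR : 0 ≤ R) (hg : 0 < g) :
    ∫⁻ t, ENNReal.ofReal (thomasFermiProfile (fun t : ℝ => 1 / 2 * t ^ 2) (R ^ 2 / 2) g t)
      = ENNReal.ofReal (2 * R ^ 3 / (3 * g)) := by
  have hint := (continuous_thomasFermiProfile (V := fun t : ℝ => 1 / 2 * t ^ 2) (μ := R ^ 2 / 2)
    (g := g) (by fun_prop)).integrable_of_hasCompactSupport (μ := volume)
    (hasCompactSupport_thomasFermiProfile_harmonic hR)
  rw [← ofReal_integral_eq_lintegral_ofReal hint (ae_of_all _ (thomasFermiProfile_nonneg hg)),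
    integral_thomasFermiProfile_harmonic hR]

theorem thomasFermiProfile_harmonic_eq_of_pow_three (hR : 0 < R) (hR3 : R ^ 3 = 3 * g / 2) :
    thomasFermiProfile (fun t : ℝ => 1 / 2 * t ^ 2) (R ^ 2 / 2) g
      = fun t => 3 / (4 * R) * max (1 - t ^ 2 / R ^ 2) 0 := by
  have hg : g = 2 * R ^ 3 / 3 := by linarith
  have hg₀ : 0 < g := by rw [hg]; positivity
  ext t
  have hrescale : R ^ 2 / 2 - 1 / 2 * t ^ 2 = g * (3 / (4 * R)) * (1 - t ^ 2 / R ^ 2) := by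
    rw [hg]; field_simp; ring
  rw [thomasFermiProfile, hrescale, ← mul_zero (g * (3 / (4 * R))),
    ← mul_max_of_nonneg _ _ (by positivity), mul_zero, mul_assoc, mul_div_cancel_left₀ _ hg₀.ne']

end Harmonic

/-- The 1D limiting problem `J` has the explicit inverted-parabola minimizer
`p₀(t)² = (3/(4R))(1 − t²/R²)₊`, `R = (3g₀/2)^{1/3}`, unique among
nonnegative functions. -/
theorem one_dim_minimizer (g₀ : ℝ) (hg : 0 < g₀) :
    let R : ℝ := (3*g₀/2)^((1:ℝ)/3)
    let p₀ : ℝ → ℝ := fun t => Real.sqrt ((3/(4*R)) * max (1 - t^2/R^2) 0)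
    let F : (ℝ → ℝ) → ENNReal := fun p =>
      (∫⁻ t : ℝ, ENNReal.ofReal ((1/2) * t^2 * (p t)^2))
        + ∫⁻ t : ℝ, ENNReal.ofReal ((g₀/2) * (p t)^4)
    ((∫⁻ t : ℝ, ENNReal.ofReal ((p₀ t)^2)) = 1)
    ∧ (∀ p : ℝ → ℝ, MemLp p 2 volume → MemLp p 4 volume →
        (∫⁻ t : ℝ, ENNReal.ofReal ((p t)^2)) = 1 → F p₀ ≤ F p)
    ∧ (∀ p : ℝ → ℝ, (∀ t, 0 ≤ p t) → MemLp p 2 volume → MemLp p 4 volume →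
        (∫⁻ t : ℝ, ENNReal.ofReal ((p t)^2)) = 1 → F p = F p₀ →
        p =ᵐ[volume] p₀) := by
  intro R p₀ F
  have hR : 0 < R := by positivity
  have hR3 : R ^ 3 = 3 * g₀ / 2 := by
    rw [← Real.rpow_natCast, ← Real.rpow_mul (by positivity)]
    norm_num
  set V : ℝ → ℝ := fun t => 1 / 2 * t ^ 2
  set w := thomasFermiProfile V (R ^ 2 / 2) g₀
  have hw : w = fun t => 3 / (4 * R) * max (1 - t ^ 2 / R ^ 2) 0 :=
    thomasFermiProfile_harmonic_eq_of_pow_three hR hR3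
  have hp₀ : p₀ = fun t => √(w t) := by
    rw [hw]
  have hp₀_sq : (fun t => p₀ t ^ 2) = w := by
    ext t; rw [hp₀, sq_sqrt (thomasFermiProfile_nonneg hg t)]
  have hF : ∀ p, F p = thomasFermiEnergy volume V g₀ (fun t => p t ^ 2) := fun p => by
    simp only [F, thomasFermiEnergy, ← pow_mul]
    rfl
  have hmass₀ : ∫⁻ t, ENNReal.ofReal (w t) = 1 := by
    rw [lintegral_thomasFermiProfile_harmonic hR.le hg, hR3,
      show 2 * (3 * g₀ / 2) / (3 * g₀) = 1 by field_simp, ENNReal.ofReal_one]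
  have hV : Measurable V := by fun_prop
  have hV₀ : ∀ t, 0 ≤ V t := fun t => by positivity
  refine ⟨by rwa [← hp₀_sq] at hmass₀, fun p hp _ hmass => ?_, fun p hp_nonneg hp _ hmass hFp => ?_⟩
  · rw [hF, hF, hp₀_sq]
    exact thomasFermiEnergy_profile_le hV hV₀ (by positivity) hg hmass₀
      (hp.aestronglyMeasurable.aemeasurable.pow_const 2) (fun t => sq_nonneg (p t)) hmass
  · rw [hF, hF, hp₀_sq] at hFp
    have hfin : thomasFermiEnergy volume V g₀ w ≠ ⊤ :=
      thomasFermiEnergy_ne_top (by fun_prop) (continuous_thomasFermiProfile (by fun_prop))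
        (hasCompactSupport_thomasFermiProfile_harmonic hR.le)
    filter_upwards [ae_eq_thomasFermiProfile_of_energy_eq hV hV₀ (by positivity) hg hmass₀
      (hp.aestronglyMeasurable.aemeasurable.pow_const 2) (fun t => sq_nonneg (p t)) hmass hfin hFp]
      with t ht
    rw [hp₀, ← sqrt_sq (hp_nonneg t)]
    exact congrArg sqrt ht
end

section
/- For ρ ∈ L²(ℝ), the function u(x₁,x₂) = 2^{−1/4} e^{−πx₂²/2} ∫_ℝ e^{−(π/2)((x₁−y₁)² − 2iy₁x₂)} ρ(y₁) dy₁ belongs to Λ₀, i.e., u ∈ L²(ℝ²) and u(x₁,x₂)e^{π(x₁²+x₂²)/2} is a holomorphic function of x₁+ix₂; moreover ‖u‖_{L²(ℝ²)} ≤ 2^{1/4}‖ρ‖_{L²(ℝ)}. -/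
/-!
Writing `z = x₁ + i x₂`, the exponent rearranges as
`-(π/2) (x₂² + (x₁ - y)² - 2 i y x₂) = π y z - (π/2) y² - (π/2) |z|²`,
so `u · e^{π|z|²/2}` is `2^{-1/4}` times the Laplace transform `∫ e^{π y z} e^{-π y²/2} ρ(y) dy`
of a function with Gaussian decay, which is entire by differentiation under the integral sign.

For the bound, `|u(x₁, x₂)| ≤ 2^{-1/4} g(x₂) (|ρ| * g)(x₁)` with `g(t) = e^{-π t²/2}`. The right
side separates the variables, `‖g‖₂ = 1`, and Young's inequality `‖|ρ| * g‖₂ ≤ ‖g‖₁ ‖ρ‖₂`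
(proved via Cauchy–Schwarz) with `‖g‖₁ = √2` gives `‖u‖₂² ≤ 2^{-1/2} · 2 · ‖ρ‖₂²`.
-/

open MeasureTheory Real Metric
open scoped ENNReal

theorem lintegral_ofReal_exp_neg_mul_sq {b : ℝ} (hb : 0 < b) :
    ∫⁻ x : ℝ, ENNReal.ofReal (rexp (-b * x ^ 2)) = ENNReal.ofReal (√(π / b)) := by
  rw [← ofReal_integral_eq_lintegral_ofReal (integrable_exp_neg_mul_sq hb)
    (ae_of_all _ fun _ => (exp_pos _).le), integral_gaussian]

theorem memLp_two_exp_mul_abs_sub_mul_sq (c : ℝ) {b : ℝ} (hb : 0 < b) :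
    MemLp (fun y : ℝ => rexp (c * |y| - b * y ^ 2)) 2 := by
  have hgauss : MemLp (fun y : ℝ => rexp (-(b / 2) * y ^ 2)) 2 := by
    rw [memLp_two_iff_integrable_sq (by fun_prop)]
    refine (integrable_exp_neg_mul_sq hb).congr (ae_of_all _ fun y => ?_)
    show rexp _ = rexp _ ^ 2
    rw [← exp_nat_mul]
    ring_nf
  refine (hgauss.const_mul (rexp (c ^ 2 / (2 * b)))).of_le (by fun_prop) (ae_of_all _ fun y => ?_)
  simp only [norm_eq_abs, abs_exp, ← exp_add, exp_le_exp]
  have : c * |y| ≤ c ^ 2 / (2 * b) + b / 2 * y ^ 2 := by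
    rw [div_add' _ _ _ (by positivity), le_div_iff₀ (by positivity), ← sq_abs y]
    nlinarith [sq_nonneg (b * |y| - c)]
  linarith

theorem Complex.enorm_exp (w : ℂ) : ‖Complex.exp w‖ₑ = ENNReal.ofReal (rexp w.re) := by
  rw [← ofReal_norm, Complex.norm_exp]

theorem Complex.norm_exp_ofReal_mul_le (y : ℝ) (z : ℂ) :
    ‖Complex.exp (y * z)‖ ≤ rexp (‖z‖ * |y|) := by
  rw [Complex.norm_exp, Complex.re_ofReal_mul, Real.exp_le_exp]
  calc y * z.re ≤ |y * z.re| := le_abs_self _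
    _ ≤ ‖z‖ * |y| := by rw [abs_mul, mul_comm]; gcongr; exact Complex.abs_re_le_norm z

theorem differentiable_integral_cexp_ofReal_mul {g : ℝ → ℂ} (hg : AEStronglyMeasurable g)
    (hg_exp : ∀ c : ℝ, Integrable (fun y => rexp (c * |y|) * ‖g y‖)) :
    Differentiable ℂ (fun z => ∫ y : ℝ, Complex.exp (y * z) * g y) := by
  intro z₀
  have hF_meas : ∀ z : ℂ, AEStronglyMeasurable (fun y : ℝ => Complex.exp (y * z) * g y) :=
    fun z => (by fun_prop : Continuous fun y : ℝ => Complex.exp (y * z)).aestronglyMeasurable.mul hg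
  have hderiv_bound : ∀ y : ℝ, ∀ z ∈ ball z₀ 1,
      ‖Complex.exp (y * z) * y * g y‖ ≤ rexp ((‖z₀‖ + 2) * |y|) * ‖g y‖ := by
    intro y z hz
    have hz_norm : ‖z‖ ≤ ‖z₀‖ + 1 := by
      have := norm_le_norm_add_norm_sub' z z₀
      rw [mem_ball, dist_eq_norm] at hz
      linarith
    rw [norm_mul, norm_mul, Complex.norm_real, Real.norm_eq_abs]
    gcongr
    calc ‖Complex.exp (y * z)‖ * |y| ≤ rexp (‖z‖ * |y|) * rexp |y| := by
          gcongr
          · exact Complex.norm_exp_ofReal_mul_le y z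
          · linarith [Real.add_one_le_exp |y|]
      _ ≤ rexp ((‖z₀‖ + 2) * |y|) := by
          rw [← Real.exp_add]; gcongr; nlinarith [abs_nonneg y]
  have hF_int : Integrable (fun y : ℝ => Complex.exp (y * z₀) * g y) :=
    (hg_exp ‖z₀‖).mono' (hF_meas z₀) (Filter.Eventually.of_forall fun y => by
      rw [norm_mul]; gcongr; exact Complex.norm_exp_ofReal_mul_le y z₀)
  have hF_deriv : ∀ y : ℝ, ∀ z ∈ ball z₀ 1,
      HasDerivAt (fun z => Complex.exp (y * z) * g y) (Complex.exp (y * z) * y * g y) z := by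
    intro y z _
    simpa using ((hasDerivAt_id z).const_mul (y : ℂ)).cexp.mul_const (g y)
  exact (hasDerivAt_integral_of_dominated_loc_of_deriv_le (ball_mem_nhds z₀ one_pos)
    (Filter.Eventually.of_forall hF_meas) hF_int
    ((by fun_prop : Continuous fun y : ℝ => Complex.exp (y * z₀) * y).aestronglyMeasurable.mul hg)
    (Filter.Eventually.of_forall hderiv_bound) (hg_exp _)
    (Filter.Eventually.of_forall hF_deriv)).2.differentiableAt

theorem ENNReal.sq_lintegral_mul_le {α : Type*} [MeasurableSpace α] {μ : Measure α}
    {K g : α → ℝ≥0∞} (hK : AEMeasurable K μ) (hg : AEMeasurable g μ) :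
    (∫⁻ a, K a * g a ∂μ) ^ 2 ≤ (∫⁻ a, K a ∂μ) * ∫⁻ a, K a * g a ^ 2 ∂μ := by
  have hKg : AEMeasurable (fun a => K a * g a ^ 2) μ := hK.mul (hg.pow_const 2)
  have h := ENNReal.lintegral_mul_norm_pow_le hK hKg
    (p := 1/2) (q := 1/2) (by norm_num) (by norm_num) (by norm_num)
  have hsplit : ∀ a, K a ^ (1/2 : ℝ) * (K a * g a ^ 2) ^ (1/2 : ℝ) = K a * g a := fun a => by
    rw [ENNReal.mul_rpow_of_nonneg _ _ (by norm_num), ← mul_assoc,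
      ← ENNReal.rpow_add_of_nonneg _ _ (by norm_num) (by norm_num), ← ENNReal.rpow_natCast,
      ← ENNReal.rpow_mul]
    norm_num
  simp only [hsplit] at h
  calc (∫⁻ a, K a * g a ∂μ) ^ 2
      ≤ ((∫⁻ a, K a ∂μ) ^ (1/2 : ℝ) * (∫⁻ a, K a * g a ^ 2 ∂μ) ^ (1/2 : ℝ)) ^ 2 := by gcongr
    _ = (∫⁻ a, K a ∂μ) * ∫⁻ a, K a * g a ^ 2 ∂μ := by
      rw [mul_pow, ← ENNReal.rpow_natCast, ← ENNReal.rpow_natCast, ← ENNReal.rpow_mul,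
        ← ENNReal.rpow_mul]
      norm_num

theorem lintegral_sq_lconvolution_le {G : Type*} [MeasurableSpace G] [AddGroup G]
    [MeasurableAdd₂ G] [MeasurableNeg G] {μ : Measure G} [SFinite μ] [μ.IsAddLeftInvariant]
    {K g : G → ℝ≥0∞} (hK : AEMeasurable K μ) (hg : AEMeasurable g μ) :
    ∫⁻ x, (K ⋆ₗ[μ] g) x ^ 2 ∂μ ≤ (∫⁻ y, K y ∂μ) ^ 2 * ∫⁻ x, g x ^ 2 ∂μ := by
  simp only [lconvolution_def]
  calc ∫⁻ x, (∫⁻ y, K y * g (-y + x) ∂μ) ^ 2 ∂μ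
      ≤ ∫⁻ x, (∫⁻ y, K y ∂μ) * ∫⁻ y, K y * g (-y + x) ^ 2 ∂μ ∂μ :=
        lintegral_mono fun x =>
          ENNReal.sq_lintegral_mul_le (g := fun y => g (-y + x)) hK (by fun_prop)
    _ = (∫⁻ y, K y ∂μ) * ∫⁻ y, K y * ∫⁻ x, g (-y + x) ^ 2 ∂μ ∂μ := by
      rw [lintegral_const_mul'' _ (by fun_prop), lintegral_lintegral_swap (by fun_prop)]
      congr 1
      refine lintegral_congr fun y => lintegral_const_mul'' _ (AEMeasurable.pow_const ?_ 2)
      exact hg.comp_quasiMeasurePreserving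
        (measurePreserving_add_left μ (-y)).quasiMeasurePreserving
    _ = (∫⁻ y, K y ∂μ) ^ 2 * ∫⁻ x, g x ^ 2 ∂μ := by
      simp_rw [lintegral_add_left_eq_self (fun x => g x ^ 2)]
      rw [lintegral_mul_const'' _ hK, sq, mul_assoc]

theorem sq_eLpNorm_two {α ε : Type*} [MeasurableSpace α] [ENorm ε] (f : α → ε) (μ : Measure α) :
    eLpNorm f 2 μ ^ 2 = ∫⁻ a, ‖f a‖ₑ ^ 2 ∂μ := by
  simpa using eLpNorm_nnreal_pow_eq_lintegral (f := f) (μ := μ) (p := 2) two_ne_zero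

/-- The paper's `u = Π₀(ρ(x₁) δ₀(x₂))`, `Π₀` the projection onto the lowest Landau level. -/
noncomputable def lllTestFunction (ρ : ℝ → ℂ) (x : ℝ × ℝ) : ℂ :=
  (((2:ℝ)^(-(1:ℝ)/4) : ℝ) : ℂ) * Complex.exp (-(π:ℂ)/2 * ((x.2^2 : ℝ) : ℂ))
    * ∫ y : ℝ, Complex.exp (-(π:ℂ)/2 * ((((x.1 - y)^2 : ℝ) : ℂ) - 2 * Complex.I * y * x.2)) * ρ y

noncomputable def gaussianLaplace (ρ : ℝ → ℂ) (z : ℂ) : ℂ :=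
  ∫ y : ℝ, Complex.exp (y * (π * z)) * (rexp (-(π / 2) * y ^ 2) * ρ y)

noncomputable def halfGaussian (t : ℝ) : ℝ≥0∞ := ENNReal.ofReal (rexp (-(π / 2) * t ^ 2))

theorem lllTestFunction_eq (ρ : ℝ → ℂ) (x₁ x₂ : ℝ) :
    lllTestFunction ρ (x₁, x₂) = (((2:ℝ)^(-(1:ℝ)/4) : ℝ) : ℂ)
      * gaussianLaplace ρ (x₁ + x₂ * Complex.I)
      * Complex.exp (-(π:ℂ)/2 * ((x₁^2 + x₂^2 : ℝ) : ℂ)) := by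
  rw [lllTestFunction, gaussianLaplace, mul_assoc, mul_assoc, ← integral_const_mul,
    ← integral_mul_const]
  congr 2 with y
  have hexponent : -(π:ℂ)/2 * ((x₂^2 : ℝ) : ℂ)
        + -(π:ℂ)/2 * ((((x₁ - y)^2 : ℝ) : ℂ) - 2 * Complex.I * y * x₂)
      = y * (π * (x₁ + x₂ * Complex.I)) + ((-(π / 2) * y ^ 2 : ℝ) : ℂ)
        + -(π:ℂ)/2 * ((x₁^2 + x₂^2 : ℝ) : ℂ) := by
    push_cast; ring
  calc _ = Complex.exp (-(π:ℂ)/2 * ((x₂^2 : ℝ) : ℂ)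
        + -(π:ℂ)/2 * ((((x₁ - y)^2 : ℝ) : ℂ) - 2 * Complex.I * y * x₂)) * ρ y := by
        rw [Complex.exp_add]; ring
    _ = _ := by
        rw [hexponent, Complex.exp_add, Complex.exp_add, Complex.ofReal_exp]; ring

theorem differentiable_gaussianLaplace {ρ : ℝ → ℂ} (hρ : MemLp ρ 2) :
    Differentiable ℂ (gaussianLaplace ρ) := by
  have hweighted : ∀ c : ℝ,
      Integrable (fun y : ℝ => rexp (c * |y|) * ‖(rexp (-(π / 2) * y ^ 2) : ℂ) * ρ y‖) := by
    intro c
    refine ((memLp_two_exp_mul_abs_sub_mul_sq c (by positivity : 0 < π / 2)).integrable_mul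
      hρ.norm).congr (ae_of_all _ fun y => ?_)
    simp only [Pi.mul_apply, norm_mul, Complex.norm_real, norm_of_nonneg (exp_pos _).le,
      ← mul_assoc, ← exp_add]
    ring_nf
  exact (differentiable_integral_cexp_ofReal_mul
    ((by fun_prop : Continuous fun y : ℝ => (rexp (-(π / 2) * y ^ 2) : ℂ)).aestronglyMeasurable.mul
      hρ.aestronglyMeasurable) hweighted).comp (differentiable_id.const_mul _)

theorem measurable_halfGaussian : Measurable halfGaussian :=
  (by fun_prop : Continuous fun t : ℝ => rexp (-(π / 2) * t ^ 2)).measurable.ennreal_ofReal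

theorem lintegral_halfGaussian : ∫⁻ t, halfGaussian t = ENNReal.ofReal √2 := by
  have h := lintegral_ofReal_exp_neg_mul_sq (b := π / 2) (by positivity)
  rw [show π / (π / 2) = 2 by field_simp] at h
  exact h

theorem lintegral_halfGaussian_sq : ∫⁻ t, halfGaussian t ^ 2 = 1 := by
  have hsq : ∀ t, halfGaussian t ^ 2 = ENNReal.ofReal (rexp (-π * t ^ 2)) := fun t => by
    rw [halfGaussian, ← ENNReal.ofReal_pow (exp_pos _).le, ← exp_nat_mul]
    ring_nf
  simp_rw [hsq, lintegral_ofReal_exp_neg_mul_sq pi_pos, div_self pi_ne_zero, sqrt_one,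
    ENNReal.ofReal_one]

theorem enorm_lllTestFunction_le (ρ : ℝ → ℂ) (x₁ x₂ : ℝ) :
    ‖lllTestFunction ρ (x₁, x₂)‖ₑ ≤ ENNReal.ofReal ((2:ℝ)^(-(1:ℝ)/4))
      * (halfGaussian x₂ * ((‖ρ ·‖ₑ) ⋆ₗ halfGaussian) x₁) := by
  have hconst : ‖(((2:ℝ)^(-(1:ℝ)/4) : ℝ) : ℂ)‖ₑ = ENNReal.ofReal ((2:ℝ)^(-(1:ℝ)/4)) := by
    rw [← ofReal_norm, Complex.norm_real, norm_of_nonneg (by positivity)]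
  have hx₂ : ‖Complex.exp (-(π:ℂ)/2 * ((x₂^2 : ℝ) : ℂ))‖ₑ = halfGaussian x₂ := by
    rw [show -(π:ℂ)/2 * ((x₂^2 : ℝ) : ℂ) = ((-(π / 2) * x₂ ^ 2 : ℝ) : ℂ) by push_cast; ring,
      Complex.enorm_exp, Complex.ofReal_re, halfGaussian]
  have hintegrand : ∀ y : ℝ, ‖Complex.exp (-(π:ℂ)/2
      * ((((x₁ - y)^2 : ℝ) : ℂ) - 2 * Complex.I * y * x₂)) * ρ y‖ₑ
        = ‖ρ y‖ₑ * halfGaussian (-y + x₁) := by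
    intro y
    rw [show -(π:ℂ)/2 * ((((x₁ - y)^2 : ℝ) : ℂ) - 2 * Complex.I * y * x₂)
        = ((-(π / 2) * (-y + x₁) ^ 2 : ℝ) : ℂ) + ((π * y * x₂ : ℝ) : ℂ) * Complex.I by
          push_cast; ring,
      enorm_mul, Complex.enorm_exp, mul_comm, halfGaussian]
    simp only [Complex.add_re, Complex.ofReal_re, Complex.re_ofReal_mul, Complex.I_re, mul_zero,
      add_zero]
  rw [lllTestFunction, enorm_mul, enorm_mul, mul_assoc, hconst, hx₂, lconvolution_def,
    ← lintegral_congr hintegrand]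
  gcongr
  exact enorm_integral_le_lintegral_enorm _

theorem lintegral_enorm_lllTestFunction_sq_le {ρ : ℝ → ℂ} (hρ : AEStronglyMeasurable ρ) :
    ∫⁻ x, ‖lllTestFunction ρ x‖ₑ ^ 2
      ≤ ENNReal.ofReal ((2:ℝ)^((1:ℝ)/4)) ^ 2 * ∫⁻ y, ‖ρ y‖ₑ ^ 2 := by
  set c := ENNReal.ofReal ((2:ℝ)^(-(1:ℝ)/4))
  set F := (‖ρ ·‖ₑ) ⋆ₗ halfGaussian with hF_def
  have hF : AEMeasurable F :=
    aemeasurable_lconvolution hρ.enorm measurable_halfGaussian.aemeasurable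
  calc ∫⁻ x, ‖lllTestFunction ρ x‖ₑ ^ 2
      ≤ ∫⁻ x : ℝ × ℝ, c ^ 2 * (F x.1 ^ 2 * halfGaussian x.2 ^ 2) :=
        lintegral_mono fun x => calc
          ‖lllTestFunction ρ x‖ₑ ^ 2 ≤ (c * (halfGaussian x.2 * F x.1)) ^ 2 :=
            ENNReal.pow_le_pow_left (enorm_lllTestFunction_le ρ x.1 x.2)
          _ = c ^ 2 * (F x.1 ^ 2 * halfGaussian x.2 ^ 2) := by ring
    _ = c ^ 2 * ((∫⁻ x, F x ^ 2) * ∫⁻ t, halfGaussian t ^ 2) := by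
        rw [lintegral_const_mul' _ _ (by simp [c]), Measure.volume_eq_prod,
          lintegral_prod_mul (hF.pow_const 2) (measurable_halfGaussian.pow_const 2).aemeasurable]
    _ ≤ c ^ 2 * (((∫⁻ t, halfGaussian t) ^ 2 * ∫⁻ y, ‖ρ y‖ₑ ^ 2) * ∫⁻ t, halfGaussian t ^ 2) := by
        gcongr
        rw [hF_def, lconvolution_comm]
        exact lintegral_sq_lconvolution_le measurable_halfGaussian.aemeasurable hρ.enorm
    _ = ENNReal.ofReal ((2:ℝ)^((1:ℝ)/4)) ^ 2 * ∫⁻ y, ‖ρ y‖ₑ ^ 2 := by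
        rw [lintegral_halfGaussian, lintegral_halfGaussian_sq, mul_one, ← mul_assoc, ← mul_pow,
          ← ENNReal.ofReal_mul (by positivity), sqrt_eq_rpow, ← rpow_add two_pos]
        norm_num

theorem eLpNorm_lllTestFunction_le {ρ : ℝ → ℂ} (hρ : AEStronglyMeasurable ρ) :
    eLpNorm (lllTestFunction ρ) 2 ≤ ENNReal.ofReal ((2:ℝ)^((1:ℝ)/4)) * eLpNorm ρ 2 := by
  rw [← ENNReal.pow_le_pow_left_iff two_ne_zero, mul_pow, sq_eLpNorm_two, sq_eLpNorm_two]
  exact lintegral_enorm_lllTestFunction_sq_le hρ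

theorem continuous_lllTestFunction {ρ : ℝ → ℂ} (hρ : MemLp ρ 2) :
    Continuous (lllTestFunction ρ) := by
  have hG := (differentiable_gaussianLaplace hρ).continuous
  rw [show lllTestFunction ρ = fun x => (((2:ℝ)^(-(1:ℝ)/4) : ℝ) : ℂ)
      * gaussianLaplace ρ (x.1 + x.2 * Complex.I)
      * Complex.exp (-(π:ℂ)/2 * ((x.1^2 + x.2^2 : ℝ) : ℂ)) from
    funext fun x => lllTestFunction_eq ρ x.1 x.2]
  fun_prop

/-- The test function `u = Π₀(ρ(x₁)δ₀(x₂))` belongs to `Λ₀`, with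
`‖u‖_{L²(ℝ²)} ≤ 2^{1/4}‖ρ‖_{L²(ℝ)}`. -/
theorem test_function_in_LLL (ρ : ℝ → ℂ) (hρ : MemLp ρ 2 volume)
    (u : ℝ × ℝ → ℂ)
    (hu : ∀ x₁ x₂ : ℝ,
      u (x₁, x₂) = (((2:ℝ)^(-(1:ℝ)/4) : ℝ) : ℂ)
        * Complex.exp (-(π:ℂ)/2 * ((x₂^2 : ℝ) : ℂ))
        * ∫ y₁ : ℝ, Complex.exp (-(π:ℂ)/2
            * ((((x₁ - y₁)^2 : ℝ) : ℂ) - 2 * Complex.I * y₁ * x₂)) * ρ y₁) :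
    MemLp u 2 volume
    ∧ (∃ f : ℂ → ℂ, Differentiable ℂ f ∧ ∀ x₁ x₂ : ℝ,
        u (x₁, x₂) = f (x₁ + x₂ * Complex.I)
          * Complex.exp (-(π:ℂ)/2 * ((x₁^2 + x₂^2 : ℝ) : ℂ)))
    ∧ eLpNorm u 2 volume
        ≤ ENNReal.ofReal ((2:ℝ)^((1:ℝ)/4)) * eLpNorm ρ 2 volume := by
  obtain rfl : u = lllTestFunction ρ := funext fun x => hu x.1 x.2
  have hbound := eLpNorm_lllTestFunction_le hρ.aestronglyMeasurable
  refine ⟨⟨(continuous_lllTestFunction hρ).aestronglyMeasurable,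
      hbound.trans_lt (ENNReal.mul_lt_top ENNReal.ofReal_lt_top hρ.eLpNorm_lt_top)⟩,
    ⟨_, (differentiable_gaussianLaplace hρ).const_mul _, lllTestFunction_eq ρ⟩, hbound⟩
end
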